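/- arXiv:1804.01851 — 2 statements merged into one kernel-verified Lean document; each statement's English description precedes it below -/
import Mathlib

section
/- Let S, S̃ be subspaces of ℝ^n of equal dimension. Then sign(S) ∩ sign(S̃⊥) = {0} if and only if sign(S̃) ∩ sign(S⊥) = {0}. -/
open scoped BigOperators

noncomputable section

/-- The generalized exponential map `F_c(x) = ∑ i, c_i exp(w̃^i · x) w^i`. -/
def Fmap {d dt n : ℕ} (W : Matrix (Fin d) (Fin n) ℝ) (Wt : Matrix (Fin dt) (Fin n) ℝ)
    (c : Fin n → ℝ) (x : Fin dt → ℝ) : Fin d → ℝ :=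
  fun i => ∑ j, c j * Real.exp (∑ k, Wt k j * x k) * W i j

/-- The polyhedral cone generated by the columns of `W`. -/
def coneOf {d n : ℕ} (W : Matrix (Fin d) (Fin n) ℝ) : Set (Fin d → ℝ) :=
  {y | ∃ u : Fin n → ℝ, (∀ j, 0 ≤ u j) ∧ y = fun i => ∑ j, u j * W i j}

/-- The componentwise sign vector. -/
def signVec {n : ℕ} (x : Fin n → ℝ) : Fin n → SignType := fun i => SignType.sign (x i)

/-- The set of sign vectors of a set of real vectors. -/
def signSet {n : ℕ} (T : Set (Fin n → ℝ)) : Set (Fin n → SignType) := signVec '' T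

/-- The kernel of (the linear map given by) a matrix, as a set. -/
def kerSet {d n : ℕ} (W : Matrix (Fin d) (Fin n) ℝ) : Set (Fin n → ℝ) :=
  {x | W.mulVec x = 0}

/-- The orthogonal complement (w.r.t. the standard inner product) of a set in `ℝ^n`. -/
def orthSet {n : ℕ} (T : Set (Fin n → ℝ)) : Set (Fin n → ℝ) :=
  {v | ∀ u ∈ T, ∑ i, u i * v i = 0}

/-!
If `x ∈ S` and `v ∈ S̃ᗮ` are nonzero with the same sign vector, then `v = D x` for a diagonal
matrix `D` with positive entries, so `D S` meets `S̃ᗮ` nontrivially. Since `dim D S = dim S̃`,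
the subspaces `D S` and `S̃ᗮ` have complementary dimensions, hence `(D S)ᗮ` meets `S̃`
nontrivially. As `D` is symmetric, a nonzero `z ∈ S̃ ∩ (D S)ᗮ` satisfies `D z ∈ Sᗮ`, and `z`,
`D z` have the same sign vector.
-/

open Module

theorem exists_pos_mul_eq_of_sign_eq {α : Type*} [Field α] [LinearOrder α] [IsStrictOrderedRing α]
    {a b : α} (h : SignType.sign a = SignType.sign b) : ∃ c, 0 < c ∧ b = c * a := by
  rcases lt_trichotomy a 0 with ha | rfl | ha
  · rw [sign_neg ha, eq_comm, sign_eq_neg_one_iff] at h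
    exact ⟨b / a, div_pos_of_neg_of_neg h ha, (div_mul_cancel₀ b ha.ne).symm⟩
  · rw [sign_zero, eq_comm, sign_eq_zero_iff] at h
    exact ⟨1, one_pos, by simp [h]⟩
  · rw [sign_pos ha, eq_comm, sign_eq_one_iff] at h
    exact ⟨b / a, div_pos h ha, (div_mul_cancel₀ b ha.ne').symm⟩

section SignVectors

variable {n : ℕ}

theorem signVec_eq_zero_iff {x : Fin n → ℝ} : signVec x = 0 ↔ x = 0 := by
  simp only [funext_iff, signVec, Pi.zero_apply, sign_eq_zero_iff]

theorem signVec_mul_of_pos {d : Fin n → ℝ} (hd : ∀ i, 0 < d i) (x : Fin n → ℝ) :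
    signVec (d * x) = signVec x := by
  funext i
  simp only [signVec, Pi.mul_apply, sign_mul, sign_pos (hd i), one_mul]

theorem exists_pos_mul_eq_of_signVec_eq {x v : Fin n → ℝ} (h : signVec x = signVec v) :
    ∃ d : Fin n → ℝ, (∀ i, 0 < d i) ∧ v = d * x := by
  choose d hd hv using fun i => exists_pos_mul_eq_of_sign_eq (congrFun h i)
  exact ⟨d, hd, funext hv⟩

theorem zero_mem_orthSet (T : Set (Fin n → ℝ)) : 0 ∈ orthSet T :=
  fun _ _ => by simp

theorem signSet_inter_signSet_eq_zero_iff {T T' : Set (Fin n → ℝ)} (h₀ : 0 ∈ T) (h₀' : 0 ∈ T') :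
    signSet T ∩ signSet T' = {0} ↔ ∀ x ∈ T, ∀ v ∈ T', signVec x = signVec v → x = 0 := by
  have hsign₀ : signVec (0 : Fin n → ℝ) = 0 := signVec_eq_zero_iff.mpr rfl
  constructor
  · intro h x hx v hv hxv
    have : signVec x ∈ signSet T ∩ signSet T' := ⟨⟨x, hx, rfl⟩, ⟨v, hv, hxv.symm⟩⟩
    rwa [h, Set.mem_singleton_iff, signVec_eq_zero_iff] at this
  · intro h
    refine Set.eq_singleton_iff_unique_mem.mpr ⟨⟨⟨0, h₀, hsign₀⟩, ⟨0, h₀', hsign₀⟩⟩, ?_⟩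
    rintro _ ⟨⟨x, hx, rfl⟩, ⟨v, hv, hvx⟩⟩
    rw [h x hx v hv hvx.symm, hsign₀]

end SignVectors

section InnerProductSpace

variable {𝕜 E : Type*} [RCLike 𝕜] [NormedAddCommGroup E] [InnerProductSpace 𝕜 E]
  [FiniteDimensional 𝕜 E]

open Submodule

theorem Submodule.inf_orthogonal_eq_bot_of_orthogonal_inf_eq_bot {A B : Submodule 𝕜 E}
    (hdim : finrank 𝕜 A = finrank 𝕜 B) (h : Aᗮ ⊓ B = ⊥) : A ⊓ Bᗮ = ⊥ := by
  have hsup : Aᗮ ⊔ B = ⊤ := by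
    refine eq_top_of_disjoint _ _ ?_ (disjoint_iff.mpr h)
    rw [← finrank_add_finrank_orthogonal A, hdim, add_comm]
  rw [← orthogonal_orthogonal A, inf_orthogonal, hsup, top_orthogonal_eq_bot]

theorem LinearMap.IsSymmetric.exists_ne_zero_apply_mem_orthogonal {T : E →ₗ[𝕜] E}
    (hT : T.IsSymmetric) (hinj : Function.Injective T) {U V : Submodule 𝕜 E}
    (hdim : finrank 𝕜 U = finrank 𝕜 V) {x : E} (hxU : x ∈ U) (hx₀ : x ≠ 0) (hTx : T x ∈ Vᗮ) :
    ∃ z ∈ V, z ≠ 0 ∧ T z ∈ Uᗮ := by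
  have hTU : finrank 𝕜 (U.map T) = finrank 𝕜 V :=
    (U.equivMapOfInjective T hinj).finrank_eq.symm.trans hdim
  have hne : U.map T ⊓ Vᗮ ≠ ⊥ := by
    refine (Submodule.ne_bot_iff _).mpr ⟨T x, ⟨mem_map_of_mem hxU, hTx⟩, ?_⟩
    exact (map_ne_zero_iff T hinj).mpr hx₀
  obtain ⟨z, ⟨hzTU, hzV⟩, hz₀⟩ := (Submodule.ne_bot_iff _).mp
    (mt (inf_orthogonal_eq_bot_of_orthogonal_inf_eq_bot hTU) hne)
  refine ⟨z, hzV, hz₀, fun u hu => ?_⟩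
  rw [← hT]
  exact hzTU _ (mem_map_of_mem hu)

end InnerProductSpace

section Euclidean

variable {n : ℕ}

def euclideanSubmodule (U : Submodule ℝ (Fin n → ℝ)) : Submodule ℝ (EuclideanSpace ℝ (Fin n)) :=
  U.comap (WithLp.linearEquiv 2 ℝ (Fin n → ℝ)).toLinearMap

theorem toLp_mem_euclideanSubmodule {U : Submodule ℝ (Fin n → ℝ)} {x : Fin n → ℝ} :
    WithLp.toLp 2 x ∈ euclideanSubmodule U ↔ x ∈ U :=
  Iff.rfl

theorem finrank_euclideanSubmodule (U : Submodule ℝ (Fin n → ℝ)) :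
    finrank ℝ (euclideanSubmodule U) = finrank ℝ U := by
  rw [euclideanSubmodule, Submodule.comap_equiv_eq_map_symm, LinearEquiv.finrank_map_eq]

theorem toLp_mem_orthogonal_euclideanSubmodule_iff {U : Submodule ℝ (Fin n → ℝ)}
    {v : Fin n → ℝ} :
    WithLp.toLp 2 v ∈ (euclideanSubmodule U)ᗮ ↔ v ∈ orthSet (U : Set (Fin n → ℝ)) := by
  simp only [Submodule.mem_orthogonal, orthSet, Set.mem_ofPred_eq, SetLike.mem_coe]
  constructor
  · intro h u hu
    simpa [PiLp.inner_apply, mul_comm] using h _ (toLp_mem_euclideanSubmodule.mpr hu)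
  · intro h u hu
    simpa [PiLp.inner_apply, mul_comm] using h u.ofLp hu

theorem exists_signVec_eq_of_finrank_eq {U V : Submodule ℝ (Fin n → ℝ)}
    (hdim : finrank ℝ U = finrank ℝ V) {x v : Fin n → ℝ} (hxU : x ∈ U) (hx₀ : x ≠ 0)
    (hvV : v ∈ orthSet (V : Set (Fin n → ℝ))) (hxv : signVec x = signVec v) :
    ∃ z ∈ V, z ≠ 0 ∧ ∃ w ∈ orthSet (U : Set (Fin n → ℝ)), signVec z = signVec w := by
  obtain ⟨d, hd, rfl⟩ := exists_pos_mul_eq_of_signVec_eq hxv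
  let T := (Matrix.diagonal d).toEuclideanLin
  have hT_apply (y : Fin n → ℝ) : T (WithLp.toLp 2 y) = WithLp.toLp 2 (d * y) := by
    ext i
    simp [T, Matrix.mulVec_diagonal]
  have hT : T.IsSymmetric :=
    Matrix.isSymmetric_toEuclideanLin_iff.mpr (Matrix.isHermitian_diagonal d)
  have hinj : Function.Injective T := by
    intro a b hab
    rw [← WithLp.toLp_ofLp 2 a, ← WithLp.toLp_ofLp 2 b, hT_apply, hT_apply] at hab
    ext i
    simpa [(hd i).ne'] using congrFun (congrArg WithLp.ofLp hab) i
  obtain ⟨z, hzV, hz₀, hTz⟩ := hT.exists_ne_zero_apply_mem_orthogonal hinj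
    (U := euclideanSubmodule U) (V := euclideanSubmodule V)
    (by rw [finrank_euclideanSubmodule, finrank_euclideanSubmodule, hdim])
    (toLp_mem_euclideanSubmodule.mpr hxU) (by simpa using hx₀)
    (by rwa [hT_apply, toLp_mem_orthogonal_euclideanSubmodule_iff])
  refine ⟨z.ofLp, toLp_mem_euclideanSubmodule.mp hzV, by simpa using hz₀, d * z.ofLp, ?_,
    (signVec_mul_of_pos hd _).symm⟩
  rwa [← toLp_mem_orthogonal_euclideanSubmodule_iff, ← hT_apply]

theorem signSet_inter_signSet_orthSet_eq_zero_of_finrank_eq {U V : Submodule ℝ (Fin n → ℝ)}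
    (hdim : finrank ℝ U = finrank ℝ V)
    (h : signSet (V : Set (Fin n → ℝ)) ∩ signSet (orthSet (U : Set (Fin n → ℝ))) = {0}) :
    signSet (U : Set (Fin n → ℝ)) ∩ signSet (orthSet (V : Set (Fin n → ℝ))) = {0} := by
  rw [signSet_inter_signSet_eq_zero_iff V.zero_mem (zero_mem_orthSet _)] at h
  rw [signSet_inter_signSet_eq_zero_iff U.zero_mem (zero_mem_orthSet _)]
  intro x hx v hv hxv
  by_contra hx₀
  obtain ⟨z, hz, hz₀, w, hw, hzw⟩ := exists_signVec_eq_of_finrank_eq hdim hx hx₀ hv hxv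
  exact hz₀ (h z hz w hw hzw)

end Euclidean

/-- for subspaces `S, S̃` of `ℝ^n` of equal dimension,
`sign(S) ∩ sign(S̃⊥) = {0}` iff `sign(S̃) ∩ sign(S⊥) = {0}`. -/
theorem stmt4 {n : ℕ} (S St : Submodule ℝ (Fin n → ℝ))
    (hdim : Module.finrank ℝ S = Module.finrank ℝ St) :
    signSet (S : Set (Fin n → ℝ)) ∩ signSet (orthSet (St : Set (Fin n → ℝ))) = {0} ↔
    signSet (St : Set (Fin n → ℝ)) ∩ signSet (orthSet (S : Set (Fin n → ℝ))) = {0} :=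
  ⟨signSet_inter_signSet_orthSet_eq_zero_of_finrank_eq hdim.symm,
    signSet_inter_signSet_orthSet_eq_zero_of_finrank_eq hdim⟩
end
end

section
/- Suppose there exists a vector v ∈ S⊥ with all components positive. If for some c > 0 the image of F_c equals C° (i.e., F_c is surjective onto C°), then there exists a vector ṽ ∈ S̃⊥ with all components positive. -/
/-!
Write `F_c(x) = W (c ∘ exp θ)` with `θ = W̃ᵀ x`. The range of `F_c` is nonempty, so `C°` is
nonempty and `W` is onto, hence an open map; therefore `ε W c ∈ C°` for every `ε > 0`. Solving
`F_c(x) = ε W c` puts `c ∘ exp θ - ε c` in `S`, and pairing with the positive `v ∈ S⊥` gives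
`∑ c_j e^{θ_j} v_j = ε ∑ c_j v_j`. For `ε` small each term on the left is below `c_j v_j`, so
`θ < 0`, and `-θ = W̃ᵀ(-x)` is a positive vector of the row space `S̃⊥`.
-/

open scoped BigOperators

noncomputable section

open Matrix Filter Topology

variable {d n : ℕ}

theorem coneOf_eq_image_mulVec (W : Matrix (Fin d) (Fin n) ℝ) :
    coneOf W = W.mulVec '' Set.univ.pi fun _ => Set.Ici 0 := by
  ext y
  simp only [coneOf, Set.mem_image, Set.mem_univ_pi, Set.mem_Ici]
  refine exists_congr fun u => and_congr_right fun _ => ?_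
  rw [eq_comm, funext_iff, funext_iff]
  simp only [mulVec, dotProduct, mul_comm]

theorem mulVec_surjective_of_interior_coneOf_nonempty {W : Matrix (Fin d) (Fin n) ℝ}
    (h : (interior (coneOf W)).Nonempty) : Function.Surjective W.mulVec := by
  have hsub : coneOf W ⊆ LinearMap.range W.mulVecLin :=
    (coneOf_eq_image_mulVec W).trans_subset (Set.image_subset_range _ _)
  exact LinearMap.range_eq_top.mp
    (Submodule.eq_top_of_nonempty_interior' _ (h.mono (interior_mono hsub)))

theorem mulVec_mem_interior_coneOf {W : Matrix (Fin d) (Fin n) ℝ}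
    (hW : Function.Surjective W.mulVec) {u : Fin n → ℝ} (hu : ∀ j, 0 < u j) :
    W *ᵥ u ∈ interior (coneOf W) := by
  have hopen : IsOpenMap W.mulVecLin := IsModuleTopology.isOpenMap_of_surjective hW
  have hpos : IsOpen (Set.univ.pi fun _ : Fin n => Set.Ioi (0 : ℝ)) :=
    isOpen_set_pi Set.finite_univ fun _ _ => isOpen_Ioi
  refine interior_maximal ?_ (hopen _ hpos) ⟨u, fun j _ => hu j, rfl⟩
  rw [coneOf_eq_image_mulVec]
  exact Set.image_mono (Set.pi_mono fun _ _ => Set.Ioi_subset_Ici_self)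

theorem Fmap_eq_mulVec {dt : ℕ} (W : Matrix (Fin d) (Fin n) ℝ) (Wt : Matrix (Fin dt) (Fin n) ℝ)
    (c : Fin n → ℝ) (x : Fin dt → ℝ) :
    Fmap W Wt c x = W *ᵥ fun j => c j * Real.exp ((x ᵥ* Wt) j) := by
  funext i
  simp only [Fmap, mulVec, vecMul, dotProduct]
  exact Finset.sum_congr rfl fun j _ => by simp only [mul_comm (x _)]; ring

theorem vecMul_mem_orthSet_kerSet (Wt : Matrix (Fin d) (Fin n) ℝ) (x : Fin d → ℝ) :
    x ᵥ* Wt ∈ orthSet (kerSet Wt) := by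
  intro u hu
  change u ⬝ᵥ (x ᵥ* Wt) = 0
  rw [dotProduct_comm, ← dotProduct_mulVec, hu, dotProduct_zero]

theorem sum_mul_eq_of_mulVec_eq {W : Matrix (Fin d) (Fin n) ℝ} {v : Fin n → ℝ}
    (hv : v ∈ orthSet (kerSet W)) {a b : Fin n → ℝ} (h : W *ᵥ a = W *ᵥ b) :
    ∑ j, a j * v j = ∑ j, b j * v j := by
  have := hv (a - b) (by simp [kerSet, mulVec_sub, h])
  simpa [sub_mul, Finset.sum_sub_distrib, sub_eq_zero] using this

theorem exists_pos_forall_mul_lt {ι : Type*} [Finite ι] (V : ℝ) {p : ι → ℝ} (hp : ∀ i, 0 < p i) :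
    ∃ ε > 0, ∀ i, ε * V < p i := by
  have hlim : Tendsto (fun ε : ℝ => ε * V) (𝓝[>] 0) (𝓝 0) :=
    ((continuous_mul_const V).tendsto' 0 0 (zero_mul V)).mono_left nhdsWithin_le_nhds
  have := (eventually_all.2 fun i => hlim.eventually (gt_mem_nhds (hp i))).and self_mem_nhdsWithin
  obtain ⟨ε, hε, hεpos⟩ := this.exists
  exact ⟨ε, hεpos, hε⟩

theorem lt_zero_of_mulVec_exp_eq {W : Matrix (Fin d) (Fin n) ℝ} {v c θ : Fin n → ℝ}
    {ε : ℝ} (hv : v ∈ orthSet (kerSet W)) (hvpos : ∀ j, 0 < v j) (hc : ∀ j, 0 < c j)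
    (hε : ∀ i, ε * ∑ j, c j * v j < c i * v i)
    (h : W *ᵥ (fun j => c j * Real.exp (θ j)) = W *ᵥ (ε • c)) (i : Fin n) : θ i < 0 := by
  have hsum : ∑ j, c j * Real.exp (θ j) * v j = ε * ∑ j, c j * v j := by
    rw [sum_mul_eq_of_mulVec_eq hv h, Finset.mul_sum]
    simp only [Pi.smul_apply, smul_eq_mul, mul_assoc]
  have hterm : c i * Real.exp (θ i) * v i < c i * v i * 1 := by
    calc c i * Real.exp (θ i) * v i
        ≤ ∑ j, c j * Real.exp (θ j) * v j :=
          Finset.single_le_sum (f := fun j => c j * Real.exp (θ j) * v j)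
            (fun j _ => (mul_pos (mul_pos (hc j) (Real.exp_pos _)) (hvpos j)).le) (Finset.mem_univ i)
      _ < c i * v i * 1 := by rw [hsum, mul_one]; exact hε i
  rw [mul_right_comm] at hterm
  exact Real.exp_lt_one_iff.mp (lt_of_mul_lt_mul_left hterm (mul_pos (hc i) (hvpos i)).le)

theorem stmt11_general {d n : ℕ}
    (W Wt : Matrix (Fin d) (Fin n) ℝ)
    (hv : ∃ v ∈ orthSet (kerSet W), ∀ i, 0 < v i)
    (c : Fin n → ℝ) (hc : ∀ j, 0 < c j)
    (hsurj : Set.range (Fmap W Wt c) = interior (coneOf W)) :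
    ∃ vt ∈ orthSet (kerSet Wt), ∀ i, 0 < vt i := by
  obtain ⟨v, hvS, hvpos⟩ := hv
  have hW : Function.Surjective W.mulVec :=
    mulVec_surjective_of_interior_coneOf_nonempty (hsurj ▸ Set.range_nonempty _)
  obtain ⟨ε, hεpos, hε⟩ :=
    exists_pos_forall_mul_lt (∑ j, c j * v j) fun i => mul_pos (hc i) (hvpos i)
  obtain ⟨x, hx⟩ : W *ᵥ (ε • c) ∈ Set.range (Fmap W Wt c) :=
    hsurj ▸ mulVec_mem_interior_coneOf hW fun j => mul_pos hεpos (hc j)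
  rw [Fmap_eq_mulVec] at hx
  have hneg := lt_zero_of_mulVec_exp_eq hvS hvpos hc hε hx
  exact ⟨(-x) ᵥ* Wt, vecMul_mem_orthSet_kerSet Wt (-x), fun i => by simpa [neg_vecMul] using hneg i⟩

/-- if `S⊥` contains a strictly positive vector and for some `c > 0` the
image of `F_c` equals the interior of `C`, then `S̃⊥` contains a strictly positive
vector as well. -/
theorem stmt11 {d n : ℕ} (hd : 1 ≤ d) (hdn : d ≤ n)
    (W Wt : Matrix (Fin d) (Fin n) ℝ) (hW : W.rank = d) (hWt : Wt.rank = d)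
    (hv : ∃ v ∈ orthSet (kerSet W), ∀ i, 0 < v i)
    (c : Fin n → ℝ) (hc : ∀ j, 0 < c j)
    (hsurj : Set.range (Fmap W Wt c) = interior (coneOf W)) :
    ∃ vt ∈ orthSet (kerSet Wt), ∀ i, 0 < vt i :=
  stmt11_general W Wt hv c hc hsurj
end
end
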